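/- For all integers n and d with 2 ≤ d ≤ n/2: every Boolean function on {0,1}^n computed by a nondeterministic OBDD of width at most ⌊log₂ d⌋ is computed by a deterministic OBDD of width at most d, and there exists a Boolean function on {0,1}^n computed by a deterministic OBDD of width at most d but by no nondeterministic OBDD of width at most ⌊log₂ d⌋; i.e., the class NOBDD^{⌊log₂ d⌋} is strictly contained in the class OBDD^d. -/

import Mathlib

/-- Number of 1s in a binary string ν ∈ {0,1}^n. -/
def countOnes {n : ℕ} (ν : Fin n → Bool) : ℕ :=
  (Finset.univ.filter (fun i => ν i = true)).card

/-- Number of 0s in a binary string ν ∈ {0,1}^n. -/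
def countZeros {n : ℕ} (ν : Fin n → Bool) : ℕ :=
  (Finset.univ.filter (fun i => ν i = false)).card

/-- Number of 1s among the first `k` bits. -/
def countOnesFirst (k : ℕ) {n : ℕ} (ν : Fin n → Bool) : ℕ :=
  (Finset.univ.filter (fun i : Fin n => (i : ℕ) < k ∧ ν i = true)).card

/-- Number of 0s among the first `k` bits. -/
def countZerosFirst (k : ℕ) {n : ℕ} (ν : Fin n → Bool) : ℕ :=
  (Finset.univ.filter (fun i : Fin n => (i : ℕ) < k ∧ ν i = false)).card

/-- A deterministic OBDD of width `d` on `n` Boolean variables. -/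
structure DOBDD (n d : ℕ) where
  ord : Equiv.Perm (Fin n)
  T : Fin n → Bool → Fin d → Fin d
  start : Fin d
  Accept : Finset (Fin d)

/-- The node reached by a deterministic OBDD after reading all input bits. -/
def DOBDD.run {n d : ℕ} (M : DOBDD n d) (ν : Fin n → Bool) : Fin d :=
  (List.finRange n).foldl (fun v j => M.T j (ν (M.ord j)) v) M.start

def DOBDD.accepts {n d : ℕ} (M : DOBDD n d) (ν : Fin n → Bool) : Prop :=
  M.run ν ∈ M.Accept

/-- A deterministic OBDD computes a total Boolean function. -/
def DOBDD.computes {n d : ℕ} (M : DOBDD n d) (f : (Fin n → Bool) → Bool) : Prop :=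
  ∀ ν, M.accepts ν ↔ f ν = true

/-- A nondeterministic OBDD of width `d` on `n` Boolean variables. -/
structure NOBDD (n d : ℕ) where
  ord : Equiv.Perm (Fin n)
  T : Fin n → Bool → Fin d → Set (Fin d)
  start : Fin d
  Accept : Finset (Fin d)

/-- The set of nodes reachable by a nondeterministic OBDD after reading all input bits. -/
def NOBDD.reach {n d : ℕ} (M : NOBDD n d) (ν : Fin n → Bool) : Set (Fin d) :=
  (List.finRange n).foldl (fun S j => {w | ∃ v ∈ S, w ∈ M.T j (ν (M.ord j)) v}) {M.start}

def NOBDD.accepts {n d : ℕ} (M : NOBDD n d) (ν : Fin n → Bool) : Prop :=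
  ∃ v ∈ M.reach ν, v ∈ M.Accept

/-- A nondeterministic OBDD computes a total Boolean function. -/
def NOBDD.computes {n d : ℕ} (M : NOBDD n d) (f : (Fin n → Bool) → Bool) : Prop :=
  ∀ ν, M.accepts ν ↔ f ν = true

/-- The class of Boolean functions on n variables computed by deterministic
OBDDs of width at most `w`. -/
def OBDDclass (n w : ℕ) : Set ((Fin n → Bool) → Bool) :=
  {f | ∃ d, d ≤ w ∧ ∃ M : DOBDD n d, M.computes f}

/-- The class of Boolean functions on n variables computed by nondeterministic
OBDDs of width at most `w`. -/
def NOBDDclass (n w : ℕ) : Set ((Fin n → Bool) → Bool) :=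
  {f | ∃ d, d ≤ w ∧ ∃ M : NOBDD n d, M.computes f}

/-- Final probability distribution of a stable probabilistic OBDD given by the pair of
left-stochastic matrices `A`, variable order `ord`, and initial node `s`. -/
noncomputable def stableProbRun {n d : ℕ} (A : Bool → Matrix (Fin d) (Fin d) ℝ)
    (ord : Equiv.Perm (Fin n)) (s : Fin d) (ν : Fin n → Bool) : Fin d → ℝ :=
  (List.finRange n).foldl (fun v j => (A (ν (ord j))).mulVec v)
    (fun i => if i = s then 1 else 0)

/-- Final quantum state of a stable ID quantum OBDD given by the pair of matrices `U`
and the initial computational-basis state `q0`, reading bits in the natural order. -/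
noncomputable def quantumRunStable {n d : ℕ} (U : Bool → Matrix (Fin d) (Fin d) ℂ) (q0 : Fin d)
    (ν : Fin n → Bool) : Fin d → ℂ :=
  (List.finRange n).foldl (fun ψ j => (U (ν j)).mulVec ψ)
    (fun i => if i = q0 then 1 else 0)

/-- A quantum OBDD of width `d` on `n` Boolean variables. -/
structure QOBDD (n d : ℕ) where
  ord : Equiv.Perm (Fin n)
  U : Fin n → Bool → Matrix (Fin d) (Fin d) ℂ
  unitary : ∀ j b, U j b ∈ Matrix.unitaryGroup (Fin d) ℂ
  q0 : Fin d
  Accept : Finset (Fin d)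

/-- The final state of a quantum OBDD on input ν. -/
noncomputable def QOBDD.finalState {n d : ℕ} (M : QOBDD n d) (ν : Fin n → Bool) : Fin d → ℂ :=
  (List.finRange n).foldl (fun ψ j => (M.U j (ν (M.ord j))).mulVec ψ)
    (fun i => if i = M.q0 then 1 else 0)

/-- The acceptance probability of a quantum OBDD on input ν. -/
noncomputable def QOBDD.acceptProb {n d : ℕ} (M : QOBDD n d) (ν : Fin n → Bool) : ℝ :=
  ∑ i ∈ M.Accept, Complex.normSq (M.finalState ν i)

/-- `NotO_n(ν) = 0` iff `#0(ν) = #1(ν)`. -/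
def NotO (n : ℕ) (ν : Fin n → Bool) : Bool := !decide (countZeros ν = countOnes ν)

/-- `NotSQUARE_n(ν) = 0` iff `(#0(ν))² = #1(ν)`. -/
def NotSQUARE (n : ℕ) (ν : Fin n → Bool) : Bool := !decide ((countZeros ν) ^ 2 = countOnes ν)

/-- `NotPOWER_n(ν) = 0` iff `2^{#0(ν)} = #1(ν)`. -/
def NotPOWER (n : ℕ) (ν : Fin n → Bool) : Bool := !decide (2 ^ (countZeros ν) = countOnes ν)

/-- `MOD^k_n(ν) = 1` iff `#1(ν) ≡ 0 (mod k)`. -/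
def MODf (n k : ℕ) (ν : Fin n → Bool) : Bool := decide (countOnes ν % k = 0)

/-- `NotO^k_n(ν) = 0` iff `#^k_0(ν) = #^k_1(ν) = k/2`. -/
def NotOk (n k : ℕ) (ν : Fin n → Bool) : Bool :=
  !decide (countZerosFirst k ν = k / 2 ∧ countOnesFirst k ν = k / 2)

/-- The ordered subsequence of value bits `ν_{2i}` (1-indexed, `1 ≤ i ≤ k/2`) whose
marker bit `ν_{2i-1}` equals `b`; `b = false` gives `α(ν)` and `b = true` gives `β(ν)`. -/
def valueSubseq {n : ℕ} (k : ℕ) (b : Bool) (ν : Fin n → Bool) : List Bool :=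
  (List.range (k / 2)).filterMap (fun j =>
    if h : 2 * j + 1 < n then
      if ν ⟨2 * j, by omega⟩ = b then some (ν ⟨2 * j + 1, h⟩) else none
    else none)

/-- `EQS^k_n(ν) = 1` iff `α(ν) = β(ν)`. -/
def EQS (n k : ℕ) (ν : Fin n → Bool) : Bool :=
  decide (valueSubseq k false ν = valueSubseq k true ν)

/-- `NotEQS^k_n(ν) = 1 - EQS^k_n(ν)`. -/
def NotEQS (n k : ℕ) (ν : Fin n → Bool) : Bool := !(EQS n k ν)

/-!
An NOBDD of width `w` is determinized by the subset construction into an OBDD of width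
`2 ^ w ≤ d`. The separating function is `MOD^d`: a counter modulo `d` computes it with width `d`.
Conversely, split the levels of an NOBDD computing `MOD^d` after the first `d`; for each
`a < d`, the prefix with `a` ones followed by a suffix with `d - a` ones is accepted, so some
node reached by the prefix leads to acceptance under that suffix. These nodes are distinct,
since prefix `b` with suffix `d - a` has `b + d - a` ones, which is divisible by `d` only if
`a = b`; hence the width is at least `d > log₂ d`.
-/

open Finset

lemma countOnes_comp_perm {n : ℕ} (μ : Fin n → Bool) (σ : Equiv.Perm (Fin n)) :
    countOnes (μ ∘ σ) = countOnes μ :=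
  Finset.card_equiv σ (fun i => by simp)

def splice {n : ℕ} (k : ℕ) (x y : Fin n → Bool) : Fin n → Bool :=
  fun j => if (j : ℕ) < k then x j else y j

lemma splice_of_lt {n k : ℕ} {x y : Fin n → Bool} {j : Fin n} (hj : (j : ℕ) < k) :
    splice k x y j = x j :=
  if_pos hj

lemma splice_of_le {n k : ℕ} {x y : Fin n → Bool} {j : Fin n} (hj : k ≤ (j : ℕ)) :
    splice k x y j = y j :=
  if_neg hj.not_gt

lemma countOnes_splice_lt {n : ℕ} {a k c : ℕ} (ha : a ≤ k) (hc : k + c ≤ n) :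
    countOnes (splice k (fun j : Fin n => decide ((j : ℕ) < a))
      (fun j => decide ((j : ℕ) < k + c))) = a + c := by
  have hones : univ.filter (fun j => splice k (fun j : Fin n => decide ((j : ℕ) < a))
      (fun j => decide ((j : ℕ) < k + c)) j = true)
      = univ.filter (fun j : Fin n => (j : ℕ) < a) ∪
          (univ.filter (fun j : Fin n => (j : ℕ) < k + c) \
            univ.filter (fun j : Fin n => (j : ℕ) < k)) := by
    ext j
    simp only [splice, mem_filter, mem_univ, true_and, mem_union, mem_sdiff]
    split_ifs <;> simp only [decide_eq_true_eq] <;> omega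
  rw [countOnes, hones, card_union_of_disjoint, card_sdiff_of_subset, Fin.card_filter_val_lt,
    Fin.card_filter_val_lt, Fin.card_filter_val_lt]
  · omega
  · intro j
    simp only [mem_filter, mem_univ, true_and]
    omega
  · rw [disjoint_left]
    intro j
    simp only [mem_filter, mem_univ, true_and, mem_sdiff]
    omega

lemma val_lt_of_mem_take_finRange {n k : ℕ} {j : Fin n} (hj : j ∈ (List.finRange n).take k) :
    (j : ℕ) < k := by
  obtain ⟨i, hi, rfl⟩ := List.mem_iff_getElem.mp hj
  simp only [List.length_take, List.length_finRange] at hi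
  simp only [List.getElem_take, List.getElem_finRange, Fin.val_cast]
  omega

lemma le_val_of_mem_drop_finRange {n k : ℕ} {j : Fin n} (hj : j ∈ (List.finRange n).drop k) :
    k ≤ (j : ℕ) := by
  obtain ⟨i, hi, rfl⟩ := List.mem_iff_getElem.mp hj
  simp only [List.getElem_drop, List.getElem_finRange, Fin.val_cast]
  omega

namespace NOBDD

variable {n e : ℕ} (M : NOBDD n e)

/-- `μ` is indexed by levels, not variables: `M.reach ν` is `M.reachFrom (ν ∘ M.ord)`. -/
def reachFrom (μ : Fin n → Bool) (l : List (Fin n)) (S : Set (Fin e)) : Set (Fin e) :=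
  l.foldl (fun S j => {w | ∃ v ∈ S, w ∈ M.T j (μ j) v}) S

lemma reach_eq_reachFrom (ν : Fin n → Bool) :
    M.reach ν = M.reachFrom (ν ∘ M.ord) (List.finRange n) {M.start} := rfl

lemma reachFrom_append (μ : Fin n → Bool) (l₁ l₂ : List (Fin n)) (S : Set (Fin e)) :
    M.reachFrom μ (l₁ ++ l₂) S = M.reachFrom μ l₂ (M.reachFrom μ l₁ S) :=
  List.foldl_append

lemma reachFrom_congr {μ μ' : Fin n → Bool} {l : List (Fin n)} (h : ∀ j ∈ l, μ j = μ' j)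
    (S : Set (Fin e)) : M.reachFrom μ l S = M.reachFrom μ' l S :=
  List.foldl_ext _ _ _ fun S j hj => by rw [h j hj]

lemma mem_reachFrom_iff (μ : Fin n → Bool) (l : List (Fin n)) (S : Set (Fin e)) (w : Fin e) :
    w ∈ M.reachFrom μ l S ↔ ∃ v ∈ S, w ∈ M.reachFrom μ l {v} := by
  induction l generalizing S with
  | nil => simp [reachFrom]
  | cons j l ih =>
    simp only [reachFrom, List.foldl_cons] at ih ⊢
    rw [ih]
    constructor
    · rintro ⟨u, ⟨v, hv, hu⟩, hw⟩
      exact ⟨v, hv, (ih _).mpr ⟨u, ⟨v, rfl, hu⟩, hw⟩⟩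
    · rintro ⟨v, hv, hw⟩
      obtain ⟨u, ⟨v', hv', hu⟩, hw⟩ := (ih _).mp hw
      rw [Set.mem_singleton_iff] at hv'
      subst v'
      exact ⟨u, ⟨v, hv, hu⟩, hw⟩

lemma accepts_splice_iff (k : ℕ) (x y : Fin n → Bool) :
    M.accepts (splice k x y ∘ M.ord.symm) ↔
      ∃ u ∈ M.reachFrom x ((List.finRange n).take k) {M.start},
        ∃ v ∈ M.reachFrom y ((List.finRange n).drop k) {u}, v ∈ M.Accept := by
  have hreach : M.reach (splice k x y ∘ M.ord.symm) =
      M.reachFrom y ((List.finRange n).drop k)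
        (M.reachFrom x ((List.finRange n).take k) {M.start}) := by
    have hinput : splice k x y ∘ M.ord.symm ∘ M.ord = splice k x y := by
      ext j; simp
    rw [reach_eq_reachFrom, Function.comp_assoc, hinput]
    conv_lhs => rw [← List.take_append_drop k (List.finRange n)]
    rw [reachFrom_append,
      M.reachFrom_congr (μ' := x) fun j hj => splice_of_lt (val_lt_of_mem_take_finRange hj),
      M.reachFrom_congr (μ' := y) fun j hj => splice_of_le (le_val_of_mem_drop_finRange hj)]
  rw [accepts, hreach]
  constructor
  · rintro ⟨v, hv, hvA⟩
    obtain ⟨u, hu, hv⟩ := (M.mem_reachFrom_iff _ _ _ _).mp hv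
    exact ⟨u, hu, v, hv, hvA⟩
  · rintro ⟨u, hu, v, hv, hvA⟩
    exact ⟨v, (M.mem_reachFrom_iff _ _ _ _).mpr ⟨u, hu, hv⟩, hvA⟩

theorem card_le_of_fooling {ι : Type*} [Fintype ι] {f : (Fin n → Bool) → Bool}
    (hM : M.computes f) (k : ℕ) (x y : ι → Fin n → Bool)
    (hacc : ∀ i, f (splice k (x i) (y i) ∘ M.ord.symm) = true)
    (hrej : ∀ i j, f (splice k (x j) (y i) ∘ M.ord.symm) = true → i = j) :
    Fintype.card ι ≤ e := by
  have hmid : ∀ i, ∃ u ∈ M.reachFrom (x i) ((List.finRange n).take k) {M.start},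
      ∃ v ∈ M.reachFrom (y i) ((List.finRange n).drop k) {u}, v ∈ M.Accept :=
    fun i => (M.accepts_splice_iff k _ _).mp ((hM _).mpr (hacc i))
  choose g hg_reach hg_acc using hmid
  have hinj : Function.Injective g := by
    intro i j hij
    obtain ⟨v, hv, hvA⟩ := hg_acc i
    exact hrej i j ((hM _).mp
      ((M.accepts_splice_iff k _ _).mpr ⟨g j, hg_reach j, v, hij ▸ hv, hvA⟩))
  simpa using Fintype.card_le_of_injective g hinj

end NOBDD

lemma eq_of_add_sub_mod_eq_zero {a b d : ℕ} (ha : a < d) (hb : b < d)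
    (h : (b + (d - a)) % d = 0) : b = a := by
  rcases le_or_gt a b with hab | hab
  · rw [show b + (d - a) = b - a + d by omega, Nat.add_mod_right,
      Nat.mod_eq_of_lt (by omega)] at h
    omega
  · rw [Nat.mod_eq_of_lt (by omega)] at h
    omega

theorem NOBDD.le_width_of_computes_MODf {n d e : ℕ} (M : NOBDD n e)
    (hM : M.computes (MODf n d)) (hdn : 2 * d ≤ n) : d ≤ e := by
  have hones (a b : Fin d) : countOnes (splice d (fun j : Fin n => decide ((j : ℕ) < b))
      (fun j => decide ((j : ℕ) < d + (d - a))) ∘ M.ord.symm) = b + (d - a) := by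
    rw [countOnes_comp_perm, countOnes_splice_lt b.isLt.le (by omega)]
  simpa using M.card_le_of_fooling hM d (fun b j => decide ((j : ℕ) < (b : Fin d)))
    (fun a j => decide ((j : ℕ) < d + (d - a)))
    (fun a => by simp [hones, MODf, Nat.add_sub_cancel' a.isLt.le])
    (fun a b h => by
      simp only [hones, MODf, decide_eq_true_eq] at h
      exact (Fin.ext (eq_of_add_sub_mod_eq_zero a.isLt b.isLt h)).symm)

theorem MODf_notMem_NOBDDclass {n d w : ℕ} (hw : w < d) (hdn : 2 * d ≤ n) :
    MODf n d ∉ NOBDDclass n w := by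
  rintro ⟨e, he, M, hM⟩
  have := M.le_width_of_computes_MODf hM hdn
  omega

lemma OBDDclass_mono (n : ℕ) : Monotone (OBDDclass n) := by
  rintro w w' hw f ⟨d, hd, M, hM⟩
  exact ⟨d, hd.trans hw, M, hM⟩

def modCounter (n d : ℕ) [NeZero d] : DOBDD n d where
  ord := Equiv.refl _
  T _ b v := v + if b then 1 else 0
  start := 0
  Accept := {0}

section ModCounter

open Fin.CommRing

lemma modCounter_run {n d : ℕ} [NeZero d] (ν : Fin n → Bool) :
    (modCounter n d).run ν = (countOnes ν : Fin d) := by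
  have hsum : (modCounter n d).run ν = ∑ j, if ν j then (1 : Fin d) else 0 := by
    rw [Fin.sum_univ_def, List.sum_eq_foldl, List.foldl_map]
    rfl
  rw [hsum, Finset.sum_boole, countOnes]

theorem MODf_mem_OBDDclass {n d : ℕ} [NeZero d] : MODf n d ∈ OBDDclass n d := by
  refine ⟨d, le_rfl, modCounter n d, fun ν => ?_⟩
  rw [DOBDD.accepts, modCounter_run]
  simp [modCounter, MODf, Fin.natCast_eq_zero, Nat.dvd_iff_mod_eq_zero]

end ModCounter

namespace NOBDD

variable {n e : ℕ} (M : NOBDD n e)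

noncomputable def subsetEquiv (e : ℕ) : Finset (Fin e) ≃ Fin (2 ^ e) :=
  Fintype.equivFinOfCardEq (by simp)

open Classical in
noncomputable def toDOBDD : DOBDD n (2 ^ e) where
  ord := M.ord
  T j b v := subsetEquiv e (univ.filter fun w => ∃ u ∈ (subsetEquiv e).symm v, w ∈ M.T j b u)
  start := subsetEquiv e {M.start}
  Accept := univ.filter fun v => ∃ u ∈ (subsetEquiv e).symm v, u ∈ M.Accept

lemma coe_subsetEquiv_symm_toDOBDD_run (ν : Fin n → Bool) :
    (((subsetEquiv e).symm (M.toDOBDD.run ν) : Finset (Fin e)) : Set (Fin e)) = M.reach ν := by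
  have hstart :
      ({M.start} : Set (Fin e)) = ((subsetEquiv e).symm M.toDOBDD.start : Set (Fin e)) := by
    simp [toDOBDD]
  rw [reach, DOBDD.run, hstart]
  refine (List.foldl_hom (fun v => (((subsetEquiv e).symm v : Finset (Fin e)) : Set (Fin e)))
    fun S j => ?_).symm
  ext w
  simp [toDOBDD]

lemma toDOBDD_accepts_iff (ν : Fin n → Bool) : M.toDOBDD.accepts ν ↔ M.accepts ν := by
  rw [accepts, ← coe_subsetEquiv_symm_toDOBDD_run]
  simp [DOBDD.accepts, toDOBDD]

end NOBDD

theorem NOBDDclass_subset_OBDDclass_two_pow (n w : ℕ) :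
    NOBDDclass n w ⊆ OBDDclass n (2 ^ w) := by
  rintro f ⟨e, he, M, hM⟩
  exact ⟨2 ^ e, Nat.pow_le_pow_right two_pos he, M.toDOBDD,
    fun ν => (M.toDOBDD_accepts_iff ν).trans (hM ν)⟩

/-- For all `n, d` with `2 ≤ d ≤ n/2`: every function computed by an NOBDD of width at most
`⌊log₂ d⌋` is computed by a deterministic OBDD of width at most `d`, and some function is
computed by a deterministic OBDD of width at most `d` but by no NOBDD of width at most
`⌊log₂ d⌋`; i.e. `NOBDD^{⌊log₂ d⌋} ⊊ OBDD^d`. -/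
theorem NOBDD_log_strict_in_OBDD (n d : ℕ) (h1 : 2 ≤ d) (h2 : d ≤ n / 2) :
    (∀ f : (Fin n → Bool) → Bool, f ∈ NOBDDclass n (Nat.log 2 d) → f ∈ OBDDclass n d) ∧
    (∃ f : (Fin n → Bool) → Bool, f ∈ OBDDclass n d ∧ f ∉ NOBDDclass n (Nat.log 2 d)) ∧
    NOBDDclass n (Nat.log 2 d) ⊂ OBDDclass n d := by
  have hd : d ≠ 0 := by omega
  have : NeZero d := ⟨hd⟩
  have hsub : NOBDDclass n (Nat.log 2 d) ⊆ OBDDclass n d :=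
    (NOBDDclass_subset_OBDDclass_two_pow n _).trans
      (OBDDclass_mono n (Nat.pow_log_le_self 2 hd))
  have hsep : MODf n d ∈ OBDDclass n d ∧ MODf n d ∉ NOBDDclass n (Nat.log 2 d) :=
    ⟨MODf_mem_OBDDclass, MODf_notMem_NOBDDclass (Nat.log_lt_self 2 hd) (by omega)⟩
  exact ⟨hsub, ⟨_, hsep⟩, (Set.ssubset_iff_of_subset hsub).mpr ⟨_, hsep⟩⟩
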